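/- arXiv:0911.5019 — 2 statements merged into one kernel-verified Lean document; each statement's English description precedes it below -/
import Mathlib

section
/- For every positive integer m, as formal power series in q: ∑_{n≥0} q^{2mn} (q^{2mn+2m};q^{2m})_∞ (-q^{2mn+1};q^2)_∞ = 1 + ∑_{k≥1} q^{k^2} ∏_{j=1}^k (1 + q^{2j} + q^{4j} + ... + q^{2(m-1)j}). -/
/-!
Work in a commutative ring in which `q ^ (N + 1) = 0` (in the end `ℤ⟦X⟧ ⧸ (X ^ (N + 1))`), so that
every infinite product and series of the identity becomes finite, and the factors `1 - q^i` are units.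
Euler's identity expands `(-q^{2mn+1};q²)_∞` as `∑_k q^{k²+2mnk}/(q²;q²)_k`. After swapping the
sums, `∑_n q^{2m(k+1)n} (q^{2m(n+1)};q^{2m})_∞ = (q^{2m};q^{2m})_k` by Euler's other identity
`∑_n z^n/(q;q)_n = 1/(z;q)_∞` at `z = q^{2m(k+1)}`, and
`(q^{2m};q^{2m})_k / (q²;q²)_k = ∏_{j=1}^k (1 + q^{2j} + ⋯ + q^{2(m-1)j})`.
-/

open Finset PowerSeries

section QPoch

variable {R : Type*} [CommRing R] {q : R} {c N : ℕ}

/-- `qPoch q c s t = (q^c; q^c)_t / (q^c; q^c)_s`. -/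
def qPoch (q : R) (c s t : ℕ) : R := ∏ i ∈ Ioc s t, (1 - q ^ (c * i))

theorem qPoch_mul_qPoch {s k t : ℕ} (hsk : s ≤ k) (hkt : k ≤ t) :
    qPoch q c s k * qPoch q c k t = qPoch q c s t :=
  prod_Ioc_consecutive _ hsk hkt

theorem qPoch_eq_one_sub_mul {k t : ℕ} (h : k < t) :
    qPoch q c k t = (1 - q ^ (c * (k + 1))) * qPoch q c (k + 1) t := by
  rw [← qPoch_mul_qPoch k.le_succ h, qPoch, Nat.Ioc_succ_singleton, prod_singleton]

theorem qPoch_eq_one (hq : q ^ (N + 1) = 0) (hc : 0 < c) {s t : ℕ} (hs : N ≤ s) :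
    qPoch q c s t = 1 :=
  prod_eq_one fun i hi => by
    have : N + 1 ≤ c * i := by nlinarith [(mem_Ioc.1 hi).1]
    rw [pow_eq_zero_of_le this hq, sub_zero]

theorem qPoch_eq_qPoch_of_le (hq : q ^ (N + 1) = 0) (hc : 0 < c) {s t : ℕ} (hs : s ≤ N)
    (ht : N ≤ t) : qPoch q c s t = qPoch q c s N := by
  rw [← qPoch_mul_qPoch hs ht, qPoch_eq_one hq hc le_rfl, mul_one]

theorem isUnit_qPoch (hq : q ^ (N + 1) = 0) (hc : 0 < c) (s t : ℕ) : IsUnit (qPoch q c s t) :=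
  IsUnit.prod_iff.2 fun _ hi => IsNilpotent.isUnit_one_sub <|
    IsNilpotent.pow_of_pos ⟨N + 1, hq⟩ (Nat.mul_pos hc (Nat.zero_lt_of_lt (mem_Ioc.1 hi).1)).ne'

theorem prod_range_one_sub_pow_eq_qPoch (hq : q ^ (N + 1) = 0) (hc : 0 < c) {s : ℕ}
    (hs : s ≤ N) : ∏ j ∈ range (N + 1), (1 - q ^ (c * (s + 1 + j))) = qPoch q c s N := by
  rw [← qPoch_eq_qPoch_of_le hq hc hs (by omega : N ≤ s + (N + 1)), qPoch,
    ← Ico_add_one_add_one_eq_Ioc, prod_Ico_eq_prod_range]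
  exact prod_congr (by congr 1; omega) fun _ _ => rfl

theorem prod_Icc_geom_sum_mul_qPoch (m k : ℕ) :
    (∏ j ∈ Icc 1 k, ∑ i ∈ range m, q ^ (c * i * j)) * qPoch q c 0 k = qPoch q (c * m) 0 k := by
  rw [qPoch, qPoch, ← Icc_add_one_left_eq_Ioc, zero_add, ← prod_mul_distrib]
  refine prod_congr rfl fun j _ => ?_
  have := geom_sum_mul_neg (q ^ (c * j)) m
  simp only [← pow_mul] at this
  convert this using 3 <;> ring

theorem prod_range_comp_pow_eq_mul (hq : q ^ (N + 1) = 0) (hc : 0 < c) {f : R → R}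
    (hf : f 0 = 1) (a : ℕ) :
    ∏ j ∈ range (N + 1), f (q ^ (a + c * j)) =
      f (q ^ a) * ∏ j ∈ range (N + 1), f (q ^ (a + c + c * j)) := by
  have hlast : q ^ (a + c + c * N) = 0 := pow_eq_zero_of_le (by nlinarith) hq
  rw [prod_range_succ', prod_range_succ _ N, hlast, hf, mul_one, mul_zero, add_zero, mul_comm]
  exact congrArg _ (prod_congr rfl fun j _ => by ring_nf)

theorem sum_range_mul_qPoch_of_eq_zero {y : ℕ → R} (hy : y N = 0) :
    ∑ k ∈ range (N + 1), y k * qPoch q c k N =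
      ∑ k ∈ range N, y k * (1 - q ^ (c * (k + 1))) * qPoch q c (k + 1) N := by
  rw [sum_range_succ, hy, zero_mul, add_zero]
  exact sum_congr rfl fun k hk => by rw [qPoch_eq_one_sub_mul (mem_range.1 hk), mul_assoc]

theorem one_add_pow_mul_sum (hq : q ^ (N + 1) = 0) (hc : 0 < c) {a : ℕ} (ha : 0 < a) :
    (1 + q ^ a) * ∑ k ∈ range (N + 1), q ^ ((a + c) * k + c * k.choose 2) * qPoch q c k N =
      ∑ k ∈ range (N + 1), q ^ (a * k + c * k.choose 2) * qPoch q c k N := by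
  have hlast : q ^ a * q ^ ((a + c) * N + c * N.choose 2) = 0 := by
    rw [← pow_add]; exact pow_eq_zero_of_le (by nlinarith) hq
  rw [add_mul, one_mul, mul_sum]
  simp_rw [← mul_assoc]
  rw [sum_range_mul_qPoch_of_eq_zero (y := fun k => q ^ a * q ^ ((a + c) * k + c * k.choose 2))
    hlast, sum_range_succ', sum_range_succ' _ N, add_right_comm, ← sum_add_distrib]
  simp only [mul_zero, Nat.choose_zero_succ, add_zero]
  congr 1
  refine sum_congr rfl fun k _ => ?_
  have e₁ : (a + c) * (k + 1) + c * (k + 1).choose 2 =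
      (a + (a + c) * k + c * k.choose 2) + c * (k + 1) := by
    rw [Nat.choose_succ_succ', Nat.choose_one_right]; ring
  have e₂ : a * (k + 1) + c * (k + 1).choose 2 = a + (a + c) * k + c * k.choose 2 := by
    rw [Nat.choose_succ_succ', Nat.choose_one_right]; ring
  rw [e₁, e₂, pow_add, ← pow_add q a, ← add_assoc]
  ring

theorem one_sub_pow_mul_sum (hq : q ^ (N + 1) = 0) {a : ℕ} (ha : 0 < a) :
    (1 - q ^ a) * ∑ k ∈ range (N + 1), q ^ (a * k) * qPoch q c k N =
      ∑ k ∈ range (N + 1), q ^ ((a + c) * k) * qPoch q c k N := by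
  have hlast : q ^ a * q ^ (a * N) = 0 := by
    rw [← pow_add]; exact pow_eq_zero_of_le (by nlinarith) hq
  rw [sub_mul, one_mul, mul_sum]
  simp_rw [← mul_assoc]
  rw [sum_range_mul_qPoch_of_eq_zero (y := fun k => q ^ a * q ^ (a * k)) hlast,
    sum_range_succ', sum_range_succ' _ N, add_sub_right_comm, ← sum_sub_distrib]
  simp only [mul_zero]
  congr 1
  refine sum_congr rfl fun k _ => ?_
  rw [show (a + c) * (k + 1) = a * (k + 1) + c * (k + 1) by ring, pow_add, ← pow_add q a,
    show a + a * k = a * (k + 1) by ring]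
  ring

/-- Euler's `(-z;q^c)_∞ = ∑_k q^{c·C(k,2)} z^k / (q^c;q^c)_k` at `z = q^a`, times `(q^c;q^c)_N`:
both sides satisfy `F(z) = (1 + z) F(z q^c)`, and they agree trivially once `a > N`. -/
theorem prod_one_add_pow_mul_qPoch (hq : q ^ (N + 1) = 0) (hc : 0 < c) {a : ℕ} (ha : 0 < a) :
    (∏ j ∈ range (N + 1), (1 + q ^ (a + c * j))) * qPoch q c 0 N =
      ∑ k ∈ range (N + 1), q ^ (a * k + c * k.choose 2) * qPoch q c k N := by
  induction a using Nat.strong_decreasing_induction with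
  | base =>
    refine ⟨N, fun a haN ha => ?_⟩
    rw [prod_eq_one fun j _ => by rw [pow_eq_zero_of_le (by omega) hq, add_zero], one_mul,
      sum_eq_single_of_mem 0 (by simp) fun k _ hk => by
        rw [pow_eq_zero_of_le (by nlinarith [Nat.pos_of_ne_zero hk]) hq, zero_mul]]
    simp
  | step a ih =>
    rw [prod_range_comp_pow_eq_mul (f := (1 + ·)) hq hc (add_zero 1) a, mul_assoc,
      ih (a + c) (by omega) (by omega), one_add_pow_mul_sum hq hc ha]

/-- Euler's `∑_k z^k / (q^c;q^c)_k = 1 / (z;q^c)_∞` at `z = q^a`. -/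
theorem sum_pow_mul_qPoch_mul_prod_one_sub_pow (hq : q ^ (N + 1) = 0) (hc : 0 < c) {a : ℕ}
    (ha : 0 < a) :
    (∑ k ∈ range (N + 1), q ^ (a * k) * qPoch q c k N) *
        ∏ j ∈ range (N + 1), (1 - q ^ (a + c * j)) = qPoch q c 0 N := by
  induction a using Nat.strong_decreasing_induction with
  | base =>
    refine ⟨N, fun a haN ha => ?_⟩
    rw [prod_eq_one fun j _ => by rw [pow_eq_zero_of_le (by omega) hq, sub_zero], mul_one,
      sum_eq_single_of_mem 0 (by simp) fun k _ hk => by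
        rw [pow_eq_zero_of_le (by nlinarith [Nat.pos_of_ne_zero hk]) hq, zero_mul]]
    simp
  | step a ih =>
    rw [prod_range_comp_pow_eq_mul (f := (1 - ·)) hq hc (sub_zero 1) a, mul_left_comm,
      ← mul_assoc, one_sub_pow_mul_sum hq ha, ih (a + c) (by omega) (by omega)]

theorem sum_pow_mul_qPoch_eq_qPoch (hq : q ^ (N + 1) = 0) (hc : 0 < c) {k : ℕ} (hk : k ≤ N) :
    ∑ n ∈ range (N + 1), q ^ (c * (k + 1) * n) * qPoch q c n N = qPoch q c 0 k := by
  have h := sum_pow_mul_qPoch_mul_prod_one_sub_pow hq hc (a := c * (k + 1)) (by positivity)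
  simp only [← mul_add] at h
  rw [prod_range_one_sub_pow_eq_qPoch hq hc hk, ← qPoch_mul_qPoch k.zero_le hk] at h
  exact (isUnit_qPoch hq hc k N).mul_right_cancel h

end QPoch

theorem Nat.sq_eq_add_two_mul_choose_two (k : ℕ) : k ^ 2 = k + 2 * k.choose 2 := by
  induction k with
  | zero => rfl
  | succ k ih => rw [Nat.choose_succ_succ', Nat.choose_one_right]; nlinarith [ih]

section Andrews

variable {R : Type*} [CommRing R] {q : R} {N m : ℕ}

theorem andrews_summand_mul_qPoch (hq : q ^ (N + 1) = 0) (hm : 0 < m) {n : ℕ} (hn : n ≤ N) :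
    q ^ (2 * m * n) * (∏ j ∈ range (N + 1), (1 - q ^ (2 * m * n + 2 * m + 2 * m * j))) *
        (∏ j ∈ range (N + 1), (1 + q ^ (2 * m * n + 1 + 2 * j))) * qPoch q 2 0 N =
      ∑ k ∈ range (N + 1),
        q ^ (k ^ 2) * qPoch q 2 k N * (q ^ (2 * m * (k + 1) * n) * qPoch q (2 * m) n N) := by
  have hprod : ∏ j ∈ range (N + 1), (1 - q ^ (2 * m * n + 2 * m + 2 * m * j)) =
      qPoch q (2 * m) n N := by
    rw [← prod_range_one_sub_pow_eq_qPoch hq (by positivity) hn]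
    exact prod_congr rfl fun j _ => by ring_nf
  rw [hprod, mul_assoc, prod_one_add_pow_mul_qPoch hq two_pos (by omega), mul_sum]
  refine sum_congr rfl fun k _ => ?_
  have hexp : q ^ (2 * m * n) * q ^ ((2 * m * n + 1) * k + 2 * k.choose 2) =
      q ^ (k ^ 2) * q ^ (2 * m * (k + 1) * n) := by
    rw [← pow_add, ← pow_add, Nat.sq_eq_add_two_mul_choose_two]; ring_nf
  linear_combination (qPoch q (2 * m) n N * qPoch q 2 k N) * hexp

theorem andrews_rhs_mul_qPoch (m N : ℕ) :
    (1 + ∑ k ∈ Icc 1 N, q ^ (k ^ 2) * ∏ j ∈ Icc 1 k, ∑ i ∈ range m, q ^ (2 * i * j)) *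
        qPoch q 2 0 N =
      ∑ k ∈ range (N + 1), q ^ (k ^ 2) * qPoch q 2 k N * qPoch q (2 * m) 0 k := by
  rw [show range (N + 1) = insert 0 (Icc 1 N) by ext; simp; omega, sum_insert (by simp),
    add_mul, one_mul, sum_mul]
  congr 1
  · simp [qPoch]
  · refine sum_congr rfl fun k hk => ?_
    rw [← qPoch_mul_qPoch k.zero_le (mem_Icc.1 hk).2, ← prod_Icc_geom_sum_mul_qPoch m k]
    ring

theorem andrews_of_pow_eq_zero (hq : q ^ (N + 1) = 0) (hm : 0 < m) :
    ∑ n ∈ range (N + 1), q ^ (2 * m * n) *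
        (∏ j ∈ range (N + 1), (1 - q ^ (2 * m * n + 2 * m + 2 * m * j))) *
        (∏ j ∈ range (N + 1), (1 + q ^ (2 * m * n + 1 + 2 * j))) =
      1 + ∑ k ∈ Icc 1 N, q ^ (k ^ 2) * ∏ j ∈ Icc 1 k, ∑ i ∈ range m, q ^ (2 * i * j) := by
  refine (isUnit_qPoch hq two_pos 0 N).mul_right_cancel ?_
  calc _ = ∑ n ∈ range (N + 1), ∑ k ∈ range (N + 1),
          q ^ (k ^ 2) * qPoch q 2 k N * (q ^ (2 * m * (k + 1) * n) * qPoch q (2 * m) n N) := by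
        rw [sum_mul]
        exact sum_congr rfl fun n hn => andrews_summand_mul_qPoch hq hm (mem_range_succ_iff.1 hn)
    _ = ∑ k ∈ range (N + 1), q ^ (k ^ 2) * qPoch q 2 k N * qPoch q (2 * m) 0 k := by
        rw [sum_comm]
        refine sum_congr rfl fun k hk => ?_
        rw [← mul_sum, sum_pow_mul_qPoch_eq_qPoch hq (by positivity) (mem_range_succ_iff.1 hk)]
    _ = _ := (andrews_rhs_mul_qPoch m N).symm

end Andrews

theorem PowerSeries.coeff_eq_of_mk_eq {R : Type*} [CommRing R] {N : ℕ} {f g : R⟦X⟧}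
    (h : Ideal.Quotient.mk (Ideal.span {X ^ (N + 1)}) f = Ideal.Quotient.mk _ g) :
    coeff N f = coeff N g := by
  rw [Ideal.Quotient.mk_eq_mk_iff_sub_mem, Ideal.mem_span_singleton, X_pow_dvd_iff] at h
  simpa [sub_eq_zero] using h N N.lt_succ_self

/-- Andrews' identity
`∑_{n≥0} q^{2mn}(q^{2mn+2m};q^{2m})_∞(-q^{2mn+1};q²)_∞
  = 1 + ∑_{k≥1} q^{k²} ∏_{j=1}^k (1+q^{2j}+⋯+q^{2(m-1)j})`
as formal power series in `q` over `ℤ`.  Summands with index `> N` and factors of the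
infinite products with index `j > N` have no effect on the `N`-th coefficient, so that
coefficient is computed from the displayed finite truncations. -/
theorem andrews_general (m : ℕ) (hm : 0 < m) (N : ℕ) :
    PowerSeries.coeff (R := ℤ) N
      (∑ n ∈ Finset.range (N + 1),
        PowerSeries.X ^ (2 * m * n) *
          (∏ j ∈ Finset.range (N + 1),
            (1 - PowerSeries.X ^ (2 * m * n + 2 * m + 2 * m * j))) *
          (∏ j ∈ Finset.range (N + 1),
            (1 + PowerSeries.X ^ (2 * m * n + 1 + 2 * j)))) =
    PowerSeries.coeff (R := ℤ) N
      (1 + ∑ k ∈ Finset.Icc 1 N,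
        PowerSeries.X ^ (k ^ 2) *
          ∏ j ∈ Finset.Icc 1 k, ∑ i ∈ Finset.range m, PowerSeries.X ^ (2 * i * j)) := by
  apply PowerSeries.coeff_eq_of_mk_eq
  have hq : Ideal.Quotient.mk (Ideal.span {(X : ℤ⟦X⟧) ^ (N + 1)}) X ^ (N + 1) = 0 := by
    rw [← map_pow, Ideal.Quotient.eq_zero_iff_mem]
    exact Ideal.mem_span_singleton_self _
  simpa only [map_add, map_sum, map_mul, map_prod, map_pow, map_sub, map_one] using
    andrews_of_pow_eq_zero hq hm
end

section
/- For every positive integer m, as formal power series in q and a: ∑_{n≥0} q^{2mn} (q^{2mn+2m};q^{2m})_∞ (aq^{2mn+1};q^2)_∞ = 1 + ∑_{k≥1} (-a)^k q^{k^2} ∏_{j=1}^k (1 + q^{2j} + q^{4j} + ... + q^{2(m-1)j}). -/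
/-!
Work modulo `q^(N+1)`, where `q` is nilpotent and every infinite product and series becomes
finite, and multiply the left side by the unit `(q²;q²)_∞`. Euler's identity
`(q²;q²)_∞ (z;q²)_∞ = ∑_k (-z)^k q^(k(k-1)) (q^(2k+2);q²)_∞` at `z = a q^(2mn+1)` expands
the `n`-th summand. After exchanging the sums, the sum over `n` is
`∑_n Q^((k+1)n) (Q^(n+1);Q)_∞ = (Q;Q)_k` with `Q = q^(2m)` (Euler's
`∑ z^n/(Q;Q)_n = 1/(z;Q)_∞` at `z = Q^(k+1)`), and
`(Q;Q)_k (q^(2k+2);q²)_∞ = (q²;q²)_∞ ∏_{j ≤ k} (1 + q^(2j) + ⋯ + q^(2(m-1)j))`.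
Both Euler identities follow from a q-difference equation in `z` shared by the two sides,
which pins the solution down by a single value because `q` is nilpotent.
-/

open Finset

theorem Nat.two_mul_choose_two_add_self (k : ℕ) : 2 * k.choose 2 + k = k ^ 2 := by
  induction k with
  | zero => rfl
  | succ k ih => rw [Nat.choose_succ_succ', Nat.choose_one_right]; linarith

theorem PowerSeries.coeff_eq_of_mk_span_X_pow_eq {R : Type*} [CommRing R] {N : ℕ}
    {F G : PowerSeries R}
    (h : Ideal.Quotient.mk (Ideal.span {PowerSeries.X ^ (N + 1)}) F =
      Ideal.Quotient.mk (Ideal.span {PowerSeries.X ^ (N + 1)}) G) :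
    PowerSeries.coeff N F = PowerSeries.coeff N G := by
  rw [Ideal.Quotient.eq, Ideal.mem_span_singleton, PowerSeries.X_pow_dvd_iff] at h
  simpa [sub_eq_zero] using h N N.lt_succ_self

namespace AndrewsWeighted

variable {S : Type*} [CommRing S]

lemma pow_pow_eq_zero {x : S} {N d : ℕ} (hx : x ^ (N + 1) = 0) (hd : d ≠ 0) :
    (x ^ d) ^ (N + 1) = 0 := by
  rw [← pow_mul]
  exact pow_eq_zero_of_le (Nat.le_mul_of_pos_left _ (Nat.pos_of_ne_zero hd)) hx

/-- `(y^(k+1); y)_∞` truncated after the factor `1 - y^N`; exact when `y^(N+1) = 0`. -/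
def pochTail (y : S) (N k : ℕ) : S := ∏ j ∈ Ioc k N, (1 - y ^ j)

lemma pochTail_self (y : S) (N : ℕ) : pochTail y N N = 1 := by
  simp [pochTail]

lemma one_sub_pow_mul_pochTail (y : S) {N k : ℕ} (hk : k < N) :
    (1 - y ^ (k + 1)) * pochTail y N (k + 1) = pochTail y N k := by
  rw [pochTail, pochTail, ← insert_Ioc_add_one_left_eq_Ioc hk, prod_insert (by simp)]

lemma prod_Icc_mul_pochTail (y : S) {N k : ℕ} (hk : k ≤ N) :
    (∏ j ∈ Icc 1 k, (1 - y ^ j)) * pochTail y N k = pochTail y N 0 := by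
  rw [pochTail, pochTail, ← zero_add 1, Icc_add_one_left_eq_Ioc,
    prod_Ioc_consecutive _ k.zero_le hk]

lemma isUnit_pochTail {y : S} (hy : IsNilpotent y) (N k : ℕ) : IsUnit (pochTail y N k) :=
  prod_induction _ IsUnit (fun _ _ ↦ IsUnit.mul) isUnit_one fun _ hj ↦
    (hy.pow_of_pos (mem_Ioc.1 hj).1.ne_bot).isUnit_one_sub

lemma prod_range_one_sub_pow_eq_pochTail {y : S} {N : ℕ} (hy : y ^ (N + 1) = 0) (n : ℕ) :
    ∏ j ∈ range (N + 1), (1 - y ^ (n + 1 + j)) = pochTail y N n := by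
  have hsub : Ioc n N ⊆ Ioc n (n + 1 + N) := Ioc_subset_Ioc_right (by omega)
  have hone : ∀ j ∈ Ioc n (n + 1 + N), j ∉ Ioc n N → 1 - y ^ j = 1 := fun j hj hjN ↦ by
    rw [pow_eq_zero_of_le (by simp_all) hy, sub_zero]
  rw [pochTail, prod_subset hsub hone, ← Ico_add_one_add_one_eq_Ioc, prod_Ico_eq_prod_range,
    show n + 1 + N + 1 - (n + 1) = N + 1 by omega]

/-- `(y;y)_∞ e_y(z) = (y;y)_∞ / (z;y)_∞`, with `e_y(z) = ∑ z^n / (y;y)_n`,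
truncated at `N`. -/
def smallQExp (y : S) (N : ℕ) (z : S) : S :=
  ∑ n ∈ range (N + 1), z ^ n * pochTail y N n

/-- `(y;y)_∞ E_y(-z) = (y;y)_∞ (z;y)_∞`, with `E_y(z) = ∑ y^(n choose 2) z^n / (y;y)_n`,
truncated at `N`. -/
def bigQExp (y : S) (N : ℕ) (z : S) : S :=
  ∑ n ∈ range (N + 1), (-z) ^ n * y ^ n.choose 2 * pochTail y N n

lemma smallQExp_mul_right (y : S) (N : ℕ) (z : S) :
    smallQExp y N (z * y) = (1 - z) * smallQExp y N z + z ^ (N + 1) := by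
  have hterm : ∀ n ∈ range N, z ^ (n + 1) * pochTail y N (n + 1) -
      (z * y) ^ (n + 1) * pochTail y N (n + 1) = z * (z ^ n * pochTail y N n) := fun n hn ↦ by
    rw [← one_sub_pow_mul_pochTail y (mem_range.1 hn)]; ring
  have hdiff : smallQExp y N z - smallQExp y N (z * y) = z * smallQExp y N z - z ^ (N + 1) := by
    rw [smallQExp, smallQExp, ← sum_sub_distrib, sum_range_succ', sum_congr rfl hterm,
      ← mul_sum, sum_range_succ, pochTail_self]
    ring
  linear_combination -hdiff

lemma smallQExp_pow_succ {y : S} {N : ℕ} (hy : y ^ (N + 1) = 0) (k : ℕ) :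
    smallQExp y N (y ^ (k + 1)) = ∏ j ∈ Icc 1 k, (1 - y ^ j) := by
  induction k with
  | zero => simpa using smallQExp_mul_right y N 1
  | succ k ih =>
    rw [pow_succ, smallQExp_mul_right, ih, pow_pow_eq_zero hy k.succ_ne_zero, add_zero,
      prod_Icc_succ_top (by omega), mul_comm]

lemma bigQExp_eq_one_sub_mul (y : S) {N : ℕ} {z : S} (hz : z ^ (N + 1) = 0) :
    bigQExp y N z = (1 - z) * bigQExp y N (z * y) := by
  have hterm : ∀ k ∈ range N, (-z) ^ (k + 1) * y ^ (k + 1).choose 2 * pochTail y N (k + 1) -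
      (-(z * y)) ^ (k + 1) * y ^ (k + 1).choose 2 * pochTail y N (k + 1) =
      -z * ((-(z * y)) ^ k * y ^ k.choose 2 * pochTail y N k) := fun k hk ↦ by
    rw [← one_sub_pow_mul_pochTail y (mem_range.1 hk), Nat.choose_succ_succ',
      Nat.choose_one_right]
    ring
  have hdiff : bigQExp y N z - bigQExp y N (z * y) = -z * bigQExp y N (z * y) := by
    rw [bigQExp, bigQExp, ← sum_sub_distrib, sum_range_succ', sum_congr rfl hterm,
      ← mul_sum, sum_range_succ _ N, pochTail_self]
    linear_combination (-1) ^ N * y ^ N * y ^ N.choose 2 * hz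
  linear_combination hdiff

lemma bigQExp_eq_pochTail_mul_prod {y : S} {N : ℕ} (hy : y ^ (N + 1) = 0) {z : S}
    (hz : z ^ (N + 1) = 0) :
    bigQExp y N z = pochTail y N 0 * ∏ i ∈ range (N + 1), (1 - z * y ^ i) := by
  have hiter : ∀ c, bigQExp y N z =
      (∏ i ∈ range c, (1 - z * y ^ i)) * bigQExp y N (z * y ^ c) := by
    intro c
    induction c with
    | zero => simp
    | succ c ih =>
      rw [ih, bigQExp_eq_one_sub_mul y (by rw [mul_pow, hz, zero_mul]), prod_range_succ,
        pow_succ, mul_assoc, mul_assoc]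
  have hzero : bigQExp y N 0 = pochTail y N 0 := by
    simp [bigQExp, sum_range_succ']
  rw [hiter (N + 1), hy, mul_zero, hzero, mul_comm]

lemma pochTail_mul_summand_eq_sum {x : S} {N m : ℕ} (hm : 0 < m) (hx : x ^ (N + 1) = 0)
    (α : S) (n : ℕ) :
    pochTail (x ^ 2) N 0 * (x ^ (2 * m * n) *
      (∏ j ∈ range (N + 1), (1 - x ^ (2 * m * n + 2 * m + 2 * m * j))) *
      (∏ j ∈ range (N + 1), (1 - α * x ^ (2 * m * n + 1 + 2 * j)))) =
    ∑ k ∈ range (N + 1), (-α) ^ k * x ^ (k ^ 2) * pochTail (x ^ 2) N k *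
      (((x ^ (2 * m)) ^ (k + 1)) ^ n * pochTail (x ^ (2 * m)) N n) := by
  have hshift : ∏ j ∈ range (N + 1), (1 - x ^ (2 * m * n + 2 * m + 2 * m * j)) =
      pochTail (x ^ (2 * m)) N n := by
    rw [← prod_range_one_sub_pow_eq_pochTail (pow_pow_eq_zero hx (by positivity))]
    refine prod_congr rfl fun j _ ↦ ?_
    rw [← pow_mul]; ring_nf
  have heuler : pochTail (x ^ 2) N 0 *
      ∏ j ∈ range (N + 1), (1 - α * x ^ (2 * m * n + 1 + 2 * j)) =
      bigQExp (x ^ 2) N (α * x ^ (2 * m * n + 1)) := by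
    rw [bigQExp_eq_pochTail_mul_prod (pow_pow_eq_zero hx two_ne_zero)
      (by rw [mul_pow, pow_pow_eq_zero hx (by omega), mul_zero])]
    congr 1
    refine prod_congr rfl fun j _ ↦ ?_
    rw [pow_add x _ (2 * j), pow_mul]; ring
  calc _ = x ^ (2 * m * n) * pochTail (x ^ (2 * m)) N n *
        bigQExp (x ^ 2) N (α * x ^ (2 * m * n + 1)) := by
        rw [← hshift, ← heuler]; ring
    _ = _ := by
      rw [bigQExp, mul_sum]
      refine sum_congr rfl fun k _ ↦ ?_
      have hexp : 2 * m * n + ((2 * m * n + 1) * k + 2 * k.choose 2) =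
          k ^ 2 + 2 * m * (k + 1) * n := by
        rw [← Nat.two_mul_choose_two_add_self k]; ring
      calc _ = (-α) ^ k * x ^ (2 * m * n + ((2 * m * n + 1) * k + 2 * k.choose 2)) *
            pochTail (x ^ 2) N k * pochTail (x ^ (2 * m)) N n := by
            rw [pow_add, pow_add, pow_mul, pow_mul]; ring
        _ = _ := by rw [hexp, pow_add, pow_mul, pow_mul]; ring

lemma pochTail_mul_smallQExp {x : S} {N m : ℕ} (hm : 0 < m) (hx : x ^ (N + 1) = 0) {k : ℕ}
    (hk : k ≤ N) :
    pochTail (x ^ 2) N k * smallQExp (x ^ (2 * m)) N ((x ^ (2 * m)) ^ (k + 1)) =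
      pochTail (x ^ 2) N 0 * ∏ j ∈ Icc 1 k, ∑ i ∈ range m, x ^ (2 * i * j) := by
  have hfactor : ∀ j ∈ Icc 1 k, 1 - (x ^ (2 * m)) ^ j =
      (1 - (x ^ 2) ^ j) * ∑ i ∈ range m, x ^ (2 * i * j) := fun j _ ↦ by
    rw [← pow_mul, ← pow_mul, show 2 * m * j = 2 * j * m by ring, pow_mul, ← mul_neg_geom_sum]
    refine congrArg _ (sum_congr rfl fun i _ ↦ ?_)
    rw [← pow_mul, mul_right_comm]
  rw [smallQExp_pow_succ (pow_pow_eq_zero hx (by positivity)), prod_congr rfl hfactor,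
    prod_mul_distrib, ← prod_Icc_mul_pochTail (x ^ 2) hk]
  ring

theorem andrews_weighted_of_pow_eq_zero {x : S} {N m : ℕ} (hm : 0 < m) (hx : x ^ (N + 1) = 0)
    (α : S) :
    ∑ n ∈ range (N + 1), x ^ (2 * m * n) *
        (∏ j ∈ range (N + 1), (1 - x ^ (2 * m * n + 2 * m + 2 * m * j))) *
        (∏ j ∈ range (N + 1), (1 - α * x ^ (2 * m * n + 1 + 2 * j))) =
    1 + ∑ k ∈ Icc 1 N, (-α) ^ k * x ^ (k ^ 2) *
        ∏ j ∈ Icc 1 k, ∑ i ∈ range m, x ^ (2 * i * j) := by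
  refine (isUnit_pochTail ⟨N + 1, pow_pow_eq_zero hx two_ne_zero⟩ N 0).mul_left_cancel ?_
  have hsplit : ∀ f : ℕ → S, ∑ k ∈ range (N + 1), f k = f 0 + ∑ k ∈ Icc 1 N, f k :=
    fun f ↦ by
      rw [range_eq_Ico, sum_eq_sum_Ico_succ_bot (by omega : 0 < N + 1), zero_add,
        Ico_add_one_right_eq_Icc]
  calc _ = ∑ k ∈ range (N + 1), (-α) ^ k * x ^ (k ^ 2) *
        (pochTail (x ^ 2) N k * smallQExp (x ^ (2 * m)) N ((x ^ (2 * m)) ^ (k + 1))) := by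
        simp only [mul_sum, pochTail_mul_summand_eq_sum hm hx, smallQExp]
        rw [sum_comm]
        simp only [mul_assoc]
    _ = ∑ k ∈ range (N + 1), pochTail (x ^ 2) N 0 * ((-α) ^ k * x ^ (k ^ 2) *
        ∏ j ∈ Icc 1 k, ∑ i ∈ range m, x ^ (2 * i * j)) := by
        refine sum_congr rfl fun k hk ↦ ?_
        rw [pochTail_mul_smallQExp hm hx (Nat.lt_succ_iff.1 (mem_range.1 hk))]
        ring
    _ = _ := by rw [← mul_sum, hsplit]; simp

end AndrewsWeighted

/-- Summands with index `> N` and factors of the infinite products with index `j > N` have no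
effect on the `N`-th coefficient, so that coefficient is computed from the displayed finite
truncations. -/
theorem andrews_general_weighted (m : ℕ) (hm : 0 < m) (N : ℕ) :
    PowerSeries.coeff (R := Polynomial ℤ) N
      (∑ n ∈ Finset.range (N + 1),
        PowerSeries.X ^ (2 * m * n) *
          (∏ j ∈ Finset.range (N + 1),
            (1 - PowerSeries.X ^ (2 * m * n + 2 * m + 2 * m * j))) *
          (∏ j ∈ Finset.range (N + 1),
            (1 - PowerSeries.C (R := Polynomial ℤ) Polynomial.X *
              PowerSeries.X ^ (2 * m * n + 1 + 2 * j)))) =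
    PowerSeries.coeff (R := Polynomial ℤ) N
      (1 + ∑ k ∈ Finset.Icc 1 N,
        (-(PowerSeries.C (R := Polynomial ℤ) Polynomial.X)) ^ k * PowerSeries.X ^ (k ^ 2) *
          ∏ j ∈ Finset.Icc 1 k, ∑ i ∈ Finset.range m, PowerSeries.X ^ (2 * i * j)) := by
  apply PowerSeries.coeff_eq_of_mk_span_X_pow_eq
  simp only [map_sum, map_mul, map_prod, map_pow, map_sub, map_one, map_add, map_neg]
  refine AndrewsWeighted.andrews_weighted_of_pow_eq_zero hm ?_ _
  rw [← map_pow, Ideal.Quotient.eq_zero_iff_mem]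
  exact Ideal.mem_span_singleton_self _
end
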